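/- Every parabolic subalgebra of D^{(n)} is non-degenerate: if p = ⊕_{j∈ℤ} p_j is a parabolic subalgebra of D^{(n)}, then for every integer j > 0 the subspace p_{−j} has finite codimension in D^{(n)}_{−j}. -/

import Mathlib

/-!
Write `p_k = {t^k F(D) : F ∈ S_k}`. Since
`⁅t^a F(D), t^b G(D)⁆ = t^(a+b) (F(D+b) G(D) - G(D+a) F(D))`, bracketing with `D^{(n)}_0` shows
that `S_k` is stable under multiplication by the differences `G(w+k) - G(w)` of multiples `G` of
`[w]_n`, and for `k ≠ 0` these differences occur in every degree `≥ deg [w]_n`. Bracketing a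
nonzero `F ∈ S_k` with such a multiple `F · (G(w+k) - G(w))` gives a nonzero element of
`S_{2k}`, and bracketing with `D^{(n)}_{l-k}` moves it to any level `l ≥ k`; hence `S_l ≠ 0`
for all `l < 0`. Finally, for `0 ≠ F ∈ S_l` the products `F · (G(w+l) - G(w))` realise every
degree `≥ deg F + deg [w]_n`, so `S_l` has finite codimension in `ℂ[w]`.
-/

open Polynomial

/-- The weight operator `f(D)` on `ℂ[t,t⁻¹]` (Laurent polynomials), acting by
`f(D)(t^j) = f(j)·t^j`, where `t^j` is the basis vector `Finsupp.single j 1`. -/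
noncomputable def wtOp (f : ℂ[X]) : Module.End ℂ (LaurentPolynomial ℂ) :=
  (AddMonoidAlgebra.coeffLinearEquiv ℂ).symm.toLinearMap ∘ₗ
    (Finsupp.lsum ℂ fun j : ℤ => f.eval (j : ℂ) • Finsupp.lsingle j) ∘ₗ
    (AddMonoidAlgebra.coeffLinearEquiv ℂ).toLinearMap

/-- The shift operator: multiplication by `t^k`, i.e. `t^j ↦ t^{j+k}`. -/
noncomputable def shOp (k : ℤ) : Module.End ℂ (LaurentPolynomial ℂ) :=
  AddMonoidAlgebra.mapDomainLinearMap ℂ ℂ fun j : ℤ => j + k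

/-- The operator `t^k f(D)` on `ℂ[t,t⁻¹]`: first apply `f(D)`, then multiply by `t^k`. -/
noncomputable def op (k : ℤ) (f : ℂ[X]) : Module.End ℂ (LaurentPolynomial ℂ) :=
  (shOp k).comp (wtOp f)

/-- The falling-factorial polynomial `[w]_n = w(w−1)⋯(w−n+1)`. -/
noncomputable def ffp (n : ℕ) : ℂ[X] :=
  ∏ i ∈ Finset.range n, (X - C (i : ℂ))

/-- The degree-`j` component `D^{(n)}_j = {t^j f(D)[D]_n : f ∈ ℂ[w]}` of the graded Lie
algebra `D^{(n)} = D·∂_t^n` of differential operators on the circle. -/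
noncomputable def Dnj (n : ℕ) (j : ℤ) : Submodule ℂ (Module.End ℂ (LaurentPolynomial ℂ)) :=
  Submodule.span ℂ {E | ∃ f : ℂ[X], E = op j (f * ffp n)}

namespace Polynomial

variable {R : Type*} [CommRing R]

theorem natDegree_taylor_sub_self_le (c : R) (P : R[X]) :
    (taylor c P - P).natDegree ≤ P.natDegree - 1 := by
  rcases Nat.eq_zero_or_pos P.natDegree with h | h
  · rw [eq_C_of_natDegree_eq_zero h, taylor_C, sub_self, natDegree_zero]
    exact Nat.zero_le _
  refine natDegree_le_iff_coeff_eq_zero.mpr fun k hk => ?_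
  have hk' : P.natDegree ≤ k := by
    have := Nat.cast_lt.mp hk
    omega
  rcases hk'.eq_or_lt with rfl | hlt
  · rw [coeff_sub, coeff_taylor_natDegree, leadingCoeff, sub_self]
  · rw [coeff_sub, coeff_eq_zero_of_natDegree_lt hlt,
      coeff_eq_zero_of_natDegree_lt (by rwa [natDegree_taylor]), sub_self]

theorem coeff_taylor_sub_self_natDegree_sub_one (c : R) {P : R[X]} (hP : 0 < P.natDegree) :
    (taylor c P - P).coeff (P.natDegree - 1) = P.natDegree * c * P.leadingCoeff := by
  have hdeg : (hasseDeriv (P.natDegree - 1) P).natDegree < 2 :=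
    (natDegree_hasseDeriv_le _ _).trans_lt (by omega)
  have hd : 1 + (P.natDegree - 1) = P.natDegree := by omega
  rw [coeff_sub, taylor_coeff, eval_eq_sum_range' hdeg, Finset.sum_range_succ,
    Finset.sum_range_one, hasseDeriv_coeff, hasseDeriv_coeff, zero_add, hd, Nat.choose_self,
    ← Nat.choose_symm_of_eq_add hd.symm, Nat.choose_one_right, leadingCoeff]
  ring

variable [IsDomain R] [CharZero R]

theorem coeff_taylor_sub_self_natDegree_sub_one_ne_zero {c : R} (hc : c ≠ 0) {P : R[X]}
    (hP : 0 < P.natDegree) : (taylor c P - P).coeff (P.natDegree - 1) ≠ 0 := by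
  rw [coeff_taylor_sub_self_natDegree_sub_one c hP]
  exact mul_ne_zero (mul_ne_zero (Nat.cast_ne_zero.mpr hP.ne') hc)
    (leadingCoeff_ne_zero.mpr (ne_zero_of_natDegree_gt hP))

theorem natDegree_taylor_sub_self {c : R} (hc : c ≠ 0) {P : R[X]} (hP : 0 < P.natDegree) :
    (taylor c P - P).natDegree = P.natDegree - 1 :=
  (natDegree_taylor_sub_self_le c P).antisymm
    (le_natDegree_of_ne_zero (coeff_taylor_sub_self_natDegree_sub_one_ne_zero hc hP))

theorem taylor_sub_self_ne_zero {c : R} (hc : c ≠ 0) {P : R[X]} (hP : 0 < P.natDegree) :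
    taylor c P - P ≠ 0 := fun h =>
  coeff_taylor_sub_self_natDegree_sub_one_ne_zero hc hP (by rw [h, coeff_zero])

theorem sup_degreeLT_eq_top {K : Type*} [Field K] (S : Submodule K K[X]) (d : ℕ)
    (h : ∀ m : ℕ, d ≤ m → ∃ P ∈ S, P.degree = m) : S ⊔ degreeLT K d = ⊤ := by
  refine Submodule.eq_top_iff'.mpr fun Q => ?_
  induction hQ : Q.natDegree using Nat.strong_induction_on generalizing Q with
  | _ k ih =>
  by_cases hlt : Q.degree < d
  · exact Submodule.mem_sup_right (mem_degreeLT.mpr hlt)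
  have hQ0 : Q ≠ 0 := by
    rintro rfl
    exact hlt (by simp)
  have hQdeg : Q.degree = k := by rw [degree_eq_natDegree hQ0, hQ]
  obtain ⟨P, hPS, hPdeg⟩ := h k (by rw [hQdeg, not_lt] at hlt; exact_mod_cast hlt)
  have hP0 : P ≠ 0 := by
    rintro rfl
    simp at hPdeg
  set c := Q.leadingCoeff / P.leadingCoeff
  have hc : c ≠ 0 := div_ne_zero (leadingCoeff_ne_zero.mpr hQ0) (leadingCoeff_ne_zero.mpr hP0)
  have hdrop : (Q - C c * P).degree < Q.degree := by
    refine degree_sub_lt_left ?_ hQ0 ?_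
    · rw [degree_C_mul hc, hPdeg, hQdeg]
    · rw [leadingCoeff_mul, leadingCoeff_C, div_mul_cancel₀ _ (leadingCoeff_ne_zero.mpr hP0)]
  have hrest : Q - C c * P ∈ S ⊔ degreeLT K d := by
    by_cases h0 : Q - C c * P = 0
    · rw [h0]
      exact zero_mem _
    · exact ih _ (hQ ▸ natDegree_lt_natDegree h0 hdrop) _ rfl
  rw [← sub_add_cancel Q (C c * P)]
  refine add_mem hrest (Submodule.mem_sup_left ?_)
  rw [← smul_eq_C_mul]
  exact S.smul_mem c hPS

end Polynomial

theorem Submodule.finiteDimensional_map_mkQ_of_le_sup {K V : Type*} [DivisionRing K]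
    [AddCommGroup V] [Module K V] {A B W : Submodule K V} [FiniteDimensional K W]
    (h : A ≤ B ⊔ W) : FiniteDimensional K (A.map B.mkQ) := by
  refine Submodule.finiteDimensional_of_le (S₂ := W.map B.mkQ) ?_
  calc A.map B.mkQ ≤ (B ⊔ W).map B.mkQ := Submodule.map_mono h
    _ = W.map B.mkQ := by rw [Submodule.map_sup, Submodule.mkQ_map_self, bot_sup_eq]

lemma op_single (k : ℤ) (f : ℂ[X]) (m : ℤ) (c : ℂ) :
    op k f (AddMonoidAlgebra.single m c) =
      AddMonoidAlgebra.single (m + k) (f.eval (m : ℂ) * c) := by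
  have hwt : wtOp f (AddMonoidAlgebra.single m c) =
      AddMonoidAlgebra.single m (f.eval (m : ℂ) * c) := by
    simp only [wtOp, LinearMap.comp_apply, LinearEquiv.coe_coe,
      AddMonoidAlgebra.coeffLinearEquiv_apply, AddMonoidAlgebra.coeff_single, Finsupp.lsum_single,
      LinearMap.smul_apply, Finsupp.lsingle_apply, Finsupp.smul_single, smul_eq_mul,
      AddMonoidAlgebra.coeffLinearEquiv_symm_apply]
    rfl
  rw [op, LinearMap.comp_apply, hwt, shOp, AddMonoidAlgebra.mapDomainLinearMap_single]

lemma op_mul (a b : ℤ) (F G : ℂ[X]) : op a F * op b G = op (a + b) (taylor (b : ℂ) F * G) := by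
  refine AddMonoidAlgebra.lhom_ext' fun m => LinearMap.ext fun c => ?_
  change op a F (op b G (AddMonoidAlgebra.single m c)) = op (a + b) _ (AddMonoidAlgebra.single m c)
  rw [op_single, op_single, op_single, eval_mul, taylor_eval, add_assoc, add_comm a b]
  push_cast
  ring_nf

lemma op_add (k : ℤ) (F G : ℂ[X]) : op k (F + G) = op k F + op k G := by
  refine AddMonoidAlgebra.lhom_ext' fun m => LinearMap.ext fun c => ?_
  change op k (F + G) (AddMonoidAlgebra.single m c) =
    op k F (AddMonoidAlgebra.single m c) + op k G (AddMonoidAlgebra.single m c)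
  rw [op_single, op_single, op_single, eval_add, add_mul, AddMonoidAlgebra.single_add]

lemma op_smul (k : ℤ) (s : ℂ) (F : ℂ[X]) : op k (s • F) = s • op k F := by
  refine AddMonoidAlgebra.lhom_ext' fun m => LinearMap.ext fun c => ?_
  change op k (s • F) (AddMonoidAlgebra.single m c) = s • op k F (AddMonoidAlgebra.single m c)
  rw [op_single, op_single, AddMonoidAlgebra.smul_single, eval_smul, smul_eq_mul, smul_eq_mul,
    mul_assoc]

noncomputable def opL (k : ℤ) : ℂ[X] →ₗ[ℂ] Module.End ℂ (LaurentPolynomial ℂ) where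
  toFun := op k
  map_add' := op_add k
  map_smul' := op_smul k

@[simp] lemma opL_apply (k : ℤ) (F : ℂ[X]) : opL k F = op k F := rfl

lemma op_lie (a b : ℤ) (F G : ℂ[X]) :
    ⁅op a F, op b G⁆ = op (a + b) (taylor (b : ℂ) F * G - taylor (a : ℂ) G * F) := by
  rw [Ring.lie_def, op_mul, op_mul, add_comm b a, ← opL_apply, ← opL_apply, ← opL_apply,
    ← map_sub]

lemma Dnj_le_range_opL (n : ℕ) (k : ℤ) : Dnj n k ≤ LinearMap.range (opL k) :=
  Submodule.span_le.mpr <| by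
    rintro _ ⟨f, rfl⟩
    exact ⟨f * ffp n, rfl⟩

lemma ffp_ne_zero (n : ℕ) : ffp n ≠ 0 :=
  Finset.prod_ne_zero_iff.mpr fun i _ => X_sub_C_ne_zero (i : ℂ)

lemma natDegree_X_pow_mul_ffp (m n : ℕ) :
    (X ^ m * ffp n).natDegree = (ffp n).natDegree + m :=
  natDegree_X_pow_mul m (ffp_ne_zero n)

/-- The `F ∈ ℂ[w]` with `t^k F(D) ∈ p k`. -/
noncomputable def symbols (p : ℤ → Submodule ℂ (Module.End ℂ (LaurentPolynomial ℂ))) (k : ℤ) :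
    Submodule ℂ ℂ[X] :=
  (p k).comap (opL k)

section Parabolic

variable {n : ℕ} {p : ℤ → Submodule ℂ (Module.End ℂ (LaurentPolynomial ℂ))}

lemma symbols_ne_bot_of_ne_bot (hple : ∀ j : ℤ, p j ≤ Dnj n j) {k : ℤ} (h : p k ≠ ⊥) :
    symbols p k ≠ ⊥ := by
  obtain ⟨x, hx, hx0⟩ := (Submodule.ne_bot_iff _).mp h
  obtain ⟨F, rfl⟩ := Dnj_le_range_opL n k (hple k hx)
  exact (Submodule.ne_bot_iff _).mpr ⟨F, hx, fun hF => hx0 (by rw [hF, map_zero])⟩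

lemma mul_ffp_mem_symbols (hpge : ∀ j : ℤ, 0 ≤ j → p j = Dnj n j) {k : ℤ} (hk : 0 ≤ k)
    (g : ℂ[X]) : g * ffp n ∈ symbols p k := by
  change op k (g * ffp n) ∈ p k
  rw [hpge k hk]
  exact Submodule.subset_span ⟨g, rfl⟩

lemma lie_mem_symbols (hpbr : ∀ i j : ℤ, ∀ x ∈ p i, ∀ y ∈ p j, ⁅x, y⁆ ∈ p (i + j))
    {a b : ℤ} {F G : ℂ[X]} (hF : F ∈ symbols p a) (hG : G ∈ symbols p b) :
    taylor (b : ℂ) F * G - taylor (a : ℂ) G * F ∈ symbols p (a + b) := by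
  have h := hpbr a b _ hF _ hG
  rwa [opL_apply, opL_apply, op_lie] at h

lemma mul_taylor_sub_self_mem_symbols
    (hpbr : ∀ i j : ℤ, ∀ x ∈ p i, ∀ y ∈ p j, ⁅x, y⁆ ∈ p (i + j))
    (hpge : ∀ j : ℤ, 0 ≤ j → p j = Dnj n j) {k : ℤ} {F : ℂ[X]} (hF : F ∈ symbols p k)
    (g : ℂ[X]) : F * (taylor (k : ℂ) (g * ffp n) - g * ffp n) ∈ symbols p k := by
  have h := lie_mem_symbols hpbr (mul_ffp_mem_symbols hpge le_rfl g) hF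
  rw [zero_add, Int.cast_zero, taylor_zero] at h
  convert h using 1
  ring

lemma symbols_add_self_ne_bot (hpbr : ∀ i j : ℤ, ∀ x ∈ p i, ∀ y ∈ p j, ⁅x, y⁆ ∈ p (i + j))
    (hpge : ∀ j : ℤ, 0 ≤ j → p j = Dnj n j) {k : ℤ} (hk : k ≠ 0) (h : symbols p k ≠ ⊥) :
    symbols p (k + k) ≠ ⊥ := by
  have hkC : (k : ℂ) ≠ 0 := Int.cast_ne_zero.mpr hk
  obtain ⟨F, hF, hF0⟩ := (Submodule.ne_bot_iff _).mp h
  set Q := taylor (k : ℂ) (X ^ 2 * ffp n) - X ^ 2 * ffp n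
  have hQ : 0 < Q.natDegree := by
    rw [natDegree_taylor_sub_self hkC (by rw [natDegree_X_pow_mul_ffp]; omega),
      natDegree_X_pow_mul_ffp]
    omega
  have hmem := lie_mem_symbols hpbr hF (mul_taylor_sub_self_mem_symbols hpbr hpge hF (X ^ 2))
  refine (Submodule.ne_bot_iff _).mpr ⟨_, hmem, ?_⟩
  have hrw : taylor (k : ℂ) F * (F * Q) - taylor (k : ℂ) (F * Q) * F =
      -(F * taylor (k : ℂ) F * (taylor (k : ℂ) Q - Q)) := by
    rw [taylor_mul]
    ring
  rw [hrw, neg_ne_zero]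
  exact mul_ne_zero (mul_ne_zero hF0 (mt (taylor_eq_zero _ _).mp hF0))
    (taylor_sub_self_ne_zero hkC hQ)

lemma symbols_ne_bot_of_le (hpbr : ∀ i j : ℤ, ∀ x ∈ p i, ∀ y ∈ p j, ⁅x, y⁆ ∈ p (i + j))
    (hpge : ∀ j : ℤ, 0 ≤ j → p j = Dnj n j) {k l : ℤ} (hk : k ≠ 0) (hkl : k ≤ l)
    (h : symbols p k ≠ ⊥) : symbols p l ≠ ⊥ := by
  obtain ⟨F, hF, hF0⟩ := (Submodule.ne_bot_iff _).mp h
  have hT : ∀ g, taylor (k : ℂ) (g * ffp n) * F - taylor ((l - k : ℤ) : ℂ) F * (g * ffp n) ∈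
      symbols p l := fun g => by
    have h := lie_mem_symbols hpbr (mul_ffp_mem_symbols hpge (sub_nonneg.mpr hkl) g) hF
    rwa [sub_add_cancel] at h
  set U := taylor (k : ℂ) (1 * ffp n) * F - taylor ((l - k : ℤ) : ℂ) F * (1 * ffp n)
  set V := taylor (k : ℂ) (X * ffp n) * F - taylor ((l - k : ℤ) : ℂ) F * (X * ffp n)
  -- hence `U` and `V` do not both vanish
  have hUV : X * U - V = -(C (k : ℂ) * taylor (k : ℂ) (ffp n) * F) := by
    simp only [U, V, taylor_mul, taylor_X, one_mul]
    ring
  have hne : X * U - V ≠ 0 := by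
    rw [hUV, neg_ne_zero]
    exact mul_ne_zero (mul_ne_zero (C_ne_zero.mpr (Int.cast_ne_zero.mpr hk))
      (mt (taylor_eq_zero _ _).mp (ffp_ne_zero n))) hF0
  by_cases hU : U = 0
  · rw [hU, mul_zero, zero_sub, neg_ne_zero] at hne
    exact (Submodule.ne_bot_iff _).mpr ⟨V, hT X, hne⟩
  · exact (Submodule.ne_bot_iff _).mpr ⟨U, hT 1, hU⟩

lemma symbols_ne_bot_of_neg (hple : ∀ j : ℤ, p j ≤ Dnj n j)
    (hpbr : ∀ i j : ℤ, ∀ x ∈ p i, ∀ y ∈ p j, ⁅x, y⁆ ∈ p (i + j))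
    (hpge : ∀ j : ℤ, 0 ≤ j → p j = Dnj n j) (hpneg : ∃ j : ℤ, j < 0 ∧ p j ≠ ⊥)
    {l : ℤ} (hl : l < 0) : symbols p l ≠ ⊥ := by
  obtain ⟨k, hk, hpk⟩ := hpneg
  have hdouble : ∀ t : ℕ, symbols p (2 ^ t * k) ≠ ⊥ := by
    intro t
    induction t with
    | zero => simpa using symbols_ne_bot_of_ne_bot hple hpk
    | succ t ih =>
      rw [pow_succ, mul_comm _ 2, mul_assoc, two_mul]
      exact symbols_add_self_ne_bot hpbr hpge (mul_ne_zero (by positivity) hk.ne) ih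
  have hlarge : 2 ^ l.natAbs * k ≤ l := by
    have h2 : (l.natAbs : ℤ) < 2 ^ l.natAbs := by exact_mod_cast Nat.lt_two_pow_self
    calc 2 ^ l.natAbs * k ≤ 2 ^ l.natAbs * (-1) :=
          mul_le_mul_of_nonneg_left (by omega) (by positivity)
      _ ≤ l := by omega
  exact symbols_ne_bot_of_le hpbr hpge (mul_ne_zero (by positivity) hk.ne) hlarge (hdouble _)

lemma exists_symbols_sup_degreeLT_eq_top
    (hpbr : ∀ i j : ℤ, ∀ x ∈ p i, ∀ y ∈ p j, ⁅x, y⁆ ∈ p (i + j))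
    (hpge : ∀ j : ℤ, 0 ≤ j → p j = Dnj n j) {l : ℤ} (hl : l ≠ 0) (h : symbols p l ≠ ⊥) :
    ∃ d : ℕ, symbols p l ⊔ degreeLT ℂ d = ⊤ := by
  have hlC : (l : ℂ) ≠ 0 := Int.cast_ne_zero.mpr hl
  obtain ⟨F, hF, hF0⟩ := (Submodule.ne_bot_iff _).mp h
  refine ⟨F.natDegree + (ffp n).natDegree, sup_degreeLT_eq_top _ _ fun m hm => ?_⟩
  set G := X ^ (m - F.natDegree - (ffp n).natDegree + 1) * ffp n
  have hG : 0 < G.natDegree := by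
    rw [natDegree_X_pow_mul_ffp]
    omega
  refine ⟨F * (taylor (l : ℂ) G - G), mul_taylor_sub_self_mem_symbols hpbr hpge hF _, ?_⟩
  rw [degree_mul, degree_eq_natDegree hF0,
    degree_eq_natDegree (taylor_sub_self_ne_zero hlC hG), natDegree_taylor_sub_self hlC hG,
    natDegree_X_pow_mul_ffp]
  norm_cast
  omega

end Parabolic

theorem stmt12_general (n : ℕ)
    (p : ℤ → Submodule ℂ (Module.End ℂ (LaurentPolynomial ℂ)))
    (hple : ∀ j : ℤ, p j ≤ Dnj n j)
    (hpbr : ∀ i j : ℤ, ∀ x ∈ p i, ∀ y ∈ p j, ⁅x, y⁆ ∈ p (i + j))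
    (hpge : ∀ j : ℤ, 0 ≤ j → p j = Dnj n j)
    (hpneg : ∃ j : ℤ, j < 0 ∧ p j ≠ ⊥)
    (j : ℤ) (hj : 0 < j) :
    FiniteDimensional ℂ ↥((Dnj n (-j)).map (p (-j)).mkQ) := by
  obtain ⟨d, hd⟩ := exists_symbols_sup_degreeLT_eq_top hpbr hpge (by omega)
    (symbols_ne_bot_of_neg hple hpbr hpge hpneg (by omega : -j < 0))
  refine Submodule.finiteDimensional_map_mkQ_of_le_sup (W := (degreeLT ℂ d).map (opL (-j))) ?_
  calc Dnj n (-j) ≤ (⊤ : Submodule ℂ ℂ[X]).map (opL (-j)) := by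
        rw [Submodule.map_top]
        exact Dnj_le_range_opL n (-j)
    _ = (symbols p (-j)).map (opL (-j)) ⊔ (degreeLT ℂ d).map (opL (-j)) := by
        rw [← hd, Submodule.map_sup]
    _ ≤ p (-j) ⊔ (degreeLT ℂ d).map (opL (-j)) := sup_le_sup_right (Submodule.map_comap_le _ _) _

/-- Proposition 3.7 b: every parabolic subalgebra `p = ⊕_j p_j` of
`D^{(n)}` is non-degenerate: for each `j > 0`, the subspace `p_{−j}` has finite
codimension in `D^{(n)}_{−j}`, i.e. the image of `D^{(n)}_{−j}` in the quotient of the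
ambient space by `p_{−j}` (which is `D^{(n)}_{−j}/p_{−j}`, as `p_{−j} ⊆ D^{(n)}_{−j}`)
is finite-dimensional. -/
theorem stmt12 (n : ℕ) (hn : 1 ≤ n)
    (p : ℤ → Submodule ℂ (Module.End ℂ (LaurentPolynomial ℂ)))
    (hple : ∀ j : ℤ, p j ≤ Dnj n j)
    (hpbr : ∀ i j : ℤ, ∀ x ∈ p i, ∀ y ∈ p j, ⁅x, y⁆ ∈ p (i + j))
    (hpge : ∀ j : ℤ, 0 ≤ j → p j = Dnj n j)
    (hpneg : ∃ j : ℤ, j < 0 ∧ p j ≠ ⊥)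
    (j : ℤ) (hj : 0 < j) :
    FiniteDimensional ℂ ↥((Dnj n (-j)).map (p (-j)).mkQ) :=
  stmt12_general n p hple hpbr hpge hpneg j hj
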